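/- Let κ ∈ (0,1] and let f : [0,∞) → ℝ be bounded and continuous, and twice continuously differentiable on (0,∞). For x, y ∈ ℝ^d with x ≠ y, set h_f(x,y) := f(|x−y|), so that ∇_x h_f(x,y) = f'(|x−y|)(x−y)/|x−y| and ∇_y h_f(x,y) = −f'(|x−y|)(x−y)/|x−y|. Then L̃_C h_f(x,y) = (1/2) μ_{x,y,(x−y)_κ}(ℝ^d) [ f(|x−y| + min(κ,|x−y|)) + f(|x−y| − min(κ,|x−y|)) − 2 f(|x−y|) ]. -/

import Mathlib

open MeasureTheory Set
open scoped ENNReal RealInnerProductSpace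

noncomputable section

/-- `ℝ^d` as a Euclidean space. -/
abbrev Ed (d : ℕ) := EuclideanSpace ℝ (Fin d)

/-- A Lévy measure on `ℝ^d`. -/
def IsLevyMeasure {d : ℕ} (ν : Measure (Ed d)) : Prop :=
  ν {0} = 0 ∧ ∫⁻ z, ENNReal.ofReal (min 1 (‖z‖ ^ 2)) ∂ν < ⊤

/-- `ν_u := ν ∧ (δ_u ∗ ν)`. -/
def nuShift {d : ℕ} (ν : Measure (Ed d)) (u : Ed d) : Measure (Ed d) :=
  ν ⊓ ν.map (fun w => w + u)

/-- `c(x,y,u,z) = min(c(x,z), c(y,z), c(x,z−u), c(y,z−u))`. -/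
def cmin {d : ℕ} (c : Ed d → Ed d → ℝ) (x y u z : Ed d) : ℝ :=
  min (min (c x z) (c y z)) (min (c x (z - u)) (c y (z - u)))

/-- `μ_{x,y,u}(dz) = c(x,y,u,z) ν_u(dz)`. -/
def muXYU {d : ℕ} (ν : Measure (Ed d)) (c : Ed d → Ed d → ℝ) (x y u : Ed d) :
    Measure (Ed d) :=
  (nuShift ν u).withDensity (fun z => ENNReal.ofReal (cmin c x y u z))

/-- `ν̃_{x,y}(dz) = min(c(x,z), c(y,z)) ν(dz)`. -/
def nuTilde {d : ℕ} (ν : Measure (Ed d)) (c : Ed d → Ed d → ℝ) (x y : Ed d) :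
    Measure (Ed d) :=
  ν.withDensity (fun z => ENNReal.ofReal (min (c x z) (c y z)))

/-- `c̃(x,y,z) = c(x,z) − min(c(x,z), c(y,z))`. -/
def ctilde {d : ℕ} (c : Ed d → Ed d → ℝ) (x y z : Ed d) : ℝ :=
  c x z - min (c x z) (c y z)

/-- `(x−y)_κ = min(1, κ/|x−y|) (x−y)`. -/
def kap {d : ℕ} (κ : ℝ) (v : Ed d) : Ed d := (min 1 (κ / ‖v‖)) • v


/-- The operator `L̃_C` (the first three integrals of the coupling operator `L̃`)
applied to `h_f(x,y) = f(|x−y|)`, whose gradients are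
`∇_x h_f(x,y) = f'(|x−y|)(x−y)/|x−y| = −∇_y h_f(x,y)`. -/
def LCdist {d : ℕ} (ν : Measure (Ed d)) (c : Ed d → Ed d → ℝ) (κ : ℝ)
    (f : ℝ → ℝ) (x y : Ed d) : ℝ :=
  (1 / 2) * ∫ z, (f ‖x + z - (y + z + kap κ (x - y))‖ - f ‖x - y‖
      - (if ‖z‖ ≤ 1 then (deriv f ‖x - y‖ / ‖x - y‖) * ⟪x - y, z⟫ else 0)
      - (if ‖z + kap κ (x - y)‖ ≤ 1 then
          -((deriv f ‖x - y‖ / ‖x - y‖) * ⟪x - y, z + kap κ (x - y)⟫) else 0))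
      ∂(muXYU ν c x y (kap κ (y - x)))
  + (1 / 2) * ∫ z, (f ‖x + z - (y + z + kap κ (y - x))‖ - f ‖x - y‖
      - (if ‖z‖ ≤ 1 then (deriv f ‖x - y‖ / ‖x - y‖) * ⟪x - y, z⟫ else 0)
      - (if ‖z + kap κ (y - x)‖ ≤ 1 then
          -((deriv f ‖x - y‖ / ‖x - y‖) * ⟪x - y, z + kap κ (y - x)⟫) else 0))
      ∂(muXYU ν c x y (kap κ (x - y)))
  + (∫ z, (f ‖x + z - (y + z)‖ - f ‖x - y‖
      - (if ‖z‖ ≤ 1 then (deriv f ‖x - y‖ / ‖x - y‖) * ⟪x - y, z⟫ else 0)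
      - (if ‖z‖ ≤ 1 then -((deriv f ‖x - y‖ / ‖x - y‖) * ⟪x - y, z⟫) else 0))
      ∂(nuTilde ν c x y - (2⁻¹ : ℝ≥0∞) • muXYU ν c x y (kap κ (x - y))
          - (2⁻¹ : ℝ≥0∞) • muXYU ν c x y (kap κ (y - x))))

/-- The operator `L̃_R` (the last two integrals of the coupling operator `L̃`)
applied to `h_f(x,y) = f(|x−y|)`. -/
def LRdist {d : ℕ} (ν : Measure (Ed d)) (c : Ed d → Ed d → ℝ)
    (f : ℝ → ℝ) (x y : Ed d) : ℝ :=
  (∫ z, (f ‖x + z - y‖ - f ‖x - y‖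
      - (if ‖z‖ ≤ 1 then (deriv f ‖x - y‖ / ‖x - y‖) * ⟪x - y, z⟫ else 0))
      * ctilde c x y z ∂ν)
  + (∫ z, (f ‖x - (y + z)‖ - f ‖x - y‖
      - (if ‖z‖ ≤ 1 then -((deriv f ‖x - y‖ / ‖x - y‖) * ⟪x - y, z⟫) else 0))
      * ctilde c y x z ∂ν)

/-- `J(r) := inf_{x,y : |x−y| = r} μ_{x,y,x−y}(ℝ^d)`. -/
def Jfun (d : ℕ) (ν : Measure (Ed d)) (c : Ed d → Ed d → ℝ) (r : ℝ) : ℝ :=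
  sInf {m : ℝ | ∃ x y : Ed d, ‖x - y‖ = r ∧ m = (muXYU ν c x y (x - y) Set.univ).toReal}


section Aux

open Filter

lemma levy_tail_lt_top {d : ℕ} (ν : Measure (Ed d)) (hν : IsLevyMeasure ν)
    {ε : ℝ} (hε : 0 < ε) : ν {z : Ed d | ε ≤ ‖z‖} < ⊤ := by
  set S : Set (Ed d) := {z | ε ≤ ‖z‖} with hS
  have hg : Measurable fun z : Ed d => ENNReal.ofReal (min 1 (‖z‖ ^ 2)) :=
    ENNReal.measurable_ofReal.comp (measurable_const.min (measurable_norm.pow_const 2))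
  have key : ENNReal.ofReal (min 1 (ε ^ 2)) * ν S
      ≤ ∫⁻ z, ENNReal.ofReal (min 1 (‖z‖ ^ 2)) ∂ν := by
    calc ENNReal.ofReal (min 1 (ε ^ 2)) * ν S
        = ∫⁻ _z in S, ENNReal.ofReal (min 1 (ε ^ 2)) ∂ν := by
          rw [setLIntegral_const, mul_comm]
      _ ≤ ∫⁻ z in S, ENNReal.ofReal (min 1 (‖z‖ ^ 2)) ∂ν := by
          refine setLIntegral_mono hg fun z hz => ?_
          refine ENNReal.ofReal_le_ofReal (min_le_min le_rfl ?_)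
          have hz' : ε ≤ ‖z‖ := hz
          nlinarith [norm_nonneg z]
      _ ≤ ∫⁻ z, ENNReal.ofReal (min 1 (‖z‖ ^ 2)) ∂ν := setLIntegral_le_lintegral _ _
  have hcpos : (0 : ℝ) < min 1 (ε ^ 2) := lt_min one_pos (by positivity)
  by_contra htop
  push_neg at htop
  rw [top_le_iff.mp htop, ENNReal.mul_top
    (by simp only [ne_eq, ENNReal.ofReal_eq_zero, not_le]; exact hcpos)] at key
  exact hν.2.ne (top_le_iff.mp key)

lemma nuShift_lt_top {d : ℕ} (ν : Measure (Ed d)) (hν : IsLevyMeasure ν)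
    {u : Ed d} (hu : u ≠ 0) : nuShift ν u Set.univ < ⊤ := by
  have hunorm : (0 : ℝ) < ‖u‖ := norm_pos_iff.mpr hu
  have hε : (0 : ℝ) < ‖u‖ / 2 := by linarith
  set A : Set (Ed d) := {z | ‖z‖ ≤ ‖u‖ / 2} with hA
  have hAm : MeasurableSet A := measurableSet_le measurable_norm measurable_const
  have h1 : nuShift ν u A ≤ ν {z : Ed d | ‖u‖ / 2 ≤ ‖z‖} := by
    have hle : nuShift ν u A ≤ (ν.map (fun w => w + u)) A :=
      Measure.le_iff'.mp inf_le_right A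
    rw [Measure.map_apply (measurable_add_const u) hAm] at hle
    refine hle.trans (measure_mono fun w hw => ?_)
    simp only [Set.mem_preimage, hA, Set.mem_setOf_eq] at hw ⊢
    have h2 : ‖u‖ ≤ ‖w + u‖ + ‖w‖ := by
      have := norm_sub_le (w + u) w
      rwa [add_sub_cancel_left] at this
    linarith
  have h2 : nuShift ν u Aᶜ ≤ ν {z : Ed d | ‖u‖ / 2 ≤ ‖z‖} := by
    refine (Measure.le_iff'.mp inf_le_left Aᶜ).trans (measure_mono fun w hw => ?_)
    simp only [Set.mem_compl_iff, hA, Set.mem_setOf_eq, not_le] at hw ⊢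
    exact hw.le
  have htail := levy_tail_lt_top ν hν hε
  calc nuShift ν u Set.univ ≤ nuShift ν u A + nuShift ν u Aᶜ := by
        rw [← Set.union_compl_self A]; exact measure_union_le _ _
    _ ≤ ν {z : Ed d | ‖u‖ / 2 ≤ ‖z‖} + ν {z : Ed d | ‖u‖ / 2 ≤ ‖z‖} := add_le_add h1 h2
    _ < ⊤ := ENNReal.add_lt_top.mpr ⟨htail, htail⟩

lemma muXYU_isFinite {d : ℕ} (ν : Measure (Ed d)) (hν : IsLevyMeasure ν)
    (c : Ed d → Ed d → ℝ) (cUp : ℝ) (hb : ∀ x z, c x z ≤ cUp)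
    (x y : Ed d) {u : Ed d} (hu : u ≠ 0) : IsFiniteMeasure (muXYU ν c x y u) := by
  constructor
  rw [muXYU, withDensity_apply _ MeasurableSet.univ, Measure.restrict_univ]
  calc ∫⁻ z, ENNReal.ofReal (cmin c x y u z) ∂(nuShift ν u)
      ≤ ∫⁻ _z, ENNReal.ofReal cUp ∂(nuShift ν u) := by
        refine lintegral_mono fun z => ENNReal.ofReal_le_ofReal ?_
        exact le_trans (min_le_left _ _) (le_trans (min_le_left _ _) (hb x z))
    _ = ENNReal.ofReal cUp * nuShift ν u Set.univ := lintegral_const _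
    _ < ⊤ := ENNReal.mul_lt_top ENNReal.ofReal_lt_top (nuShift_lt_top ν hν hu)

lemma map_inf_equiv {α : Type*} [MeasurableSpace α] (e : α ≃ᵐ α) (a b : Measure α) :
    (a ⊓ b).map e = a.map e ⊓ b.map e := by
  refine le_antisymm (le_inf (Measure.map_mono inf_le_left e.measurable)
    (Measure.map_mono inf_le_right e.measurable)) ?_
  calc a.map e ⊓ b.map e = ((a.map e ⊓ b.map e).map e.symm).map e :=
        (MeasurableEquiv.map_map_symm e).symm
    _ ≤ (a ⊓ b).map e := Measure.map_mono (le_inf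
        ((Measure.map_mono inf_le_left e.symm.measurable).trans_eq (MeasurableEquiv.map_symm_map e))
        ((Measure.map_mono inf_le_right e.symm.measurable).trans_eq (MeasurableEquiv.map_symm_map e)))
        e.measurable

lemma withDensity_map_equiv' {α : Type*} [MeasurableSpace α] (e : α ≃ᵐ α) (μ : Measure α)
    (g : α → ℝ≥0∞) (hg : Measurable g) :
    (μ.withDensity g).map e = (μ.map e).withDensity (fun z => g (e.symm z)) := by
  ext s hs
  rw [Measure.map_apply e.measurable hs, withDensity_apply _ (e.measurable hs),
    withDensity_apply _ hs, setLIntegral_map hs (show Measurable fun z => g (e.symm z) from hg.comp e.symm.measurable) e.measurable]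
  refine setLIntegral_congr_fun (e.measurable hs) ?_
  exact fun z _ => by simp only [MeasurableEquiv.symm_apply_apply]

lemma muXYU_neg {d : ℕ} (ν : Measure (Ed d)) (c : Ed d → Ed d → ℝ)
    (hc : Continuous fun p : Ed d × Ed d => c p.1 p.2) (x y u : Ed d) :
    muXYU ν c x y (-u) = (muXYU ν c x y u).map (fun z => z - u) := by
  have hcz : ∀ w : Ed d, Continuous fun z : Ed d => c w z := fun w =>
    hc.comp (Continuous.prodMk_right w)
  have hg : Measurable fun z : Ed d => ENNReal.ofReal (cmin c x y u z) := by
    refine ENNReal.measurable_ofReal.comp (Continuous.measurable ?_)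
    exact ((hcz x).min (hcz y)).min
      (((hcz x).comp (continuous_id.sub continuous_const)).min
        ((hcz y).comp (continuous_id.sub continuous_const)))
  have hcoe : (fun z : Ed d => z - u) = ⇑(MeasurableEquiv.subRight u) := rfl
  rw [hcoe, muXYU, muXYU, withDensity_map_equiv' _ _ _ hg]
  have hmeas : (nuShift ν u).map ⇑(MeasurableEquiv.subRight u) = nuShift ν (-u) := by
    rw [nuShift, nuShift, map_inf_equiv]
    have h1 : ν.map ⇑(MeasurableEquiv.subRight u) = ν.map (fun w : Ed d => w + -u) := by
      congr 1
    have h2 : (ν.map (fun w : Ed d => w + u)).map ⇑(MeasurableEquiv.subRight u) = ν := by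
      rw [Measure.map_map (MeasurableEquiv.subRight u).measurable (measurable_add_const u)]
      have : (⇑(MeasurableEquiv.subRight u) ∘ fun w : Ed d => w + u) = id :=
        funext fun w => add_sub_cancel_right w u
      rw [this, Measure.map_id]
    rw [h1, h2, inf_comm]
  rw [hmeas]
  congr 1
  funext z
  have hsymm : (MeasurableEquiv.subRight u).symm z = z + u := rfl
  rw [hsymm]
  simp only [cmin, sub_neg_eq_add, add_sub_cancel_right]
  rw [min_comm]

lemma aux_meas {d : ℕ} (C A : ℝ) (v : Ed d) (w₁ w₂ : Ed d → Ed d)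
    (h₁ : Measurable w₁) (h₂ : Measurable w₂) :
    StronglyMeasurable fun z : Ed d => C - (if ‖w₁ z‖ ≤ 1 then A * ⟪v, w₁ z⟫ else 0)
      - (if ‖w₂ z‖ ≤ 1 then -(A * ⟪v, w₂ z⟫) else 0) := by
  have hin : Measurable fun w : Ed d => ⟪v, w⟫ :=
    (continuous_const.inner continuous_id).measurable
  refine Measurable.stronglyMeasurable (Measurable.sub (Measurable.sub measurable_const ?_) ?_)
  · exact Measurable.ite (measurableSet_le h₁.norm measurable_const)
      (measurable_const.mul (hin.comp h₁)) measurable_const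
  · exact Measurable.ite (measurableSet_le h₂.norm measurable_const)
      (measurable_const.mul (hin.comp h₂)).neg measurable_const

lemma aux_int {d : ℕ} (μ : Measure (Ed d)) [IsFiniteMeasure μ] (C A : ℝ) (v : Ed d)
    (w₁ w₂ : Ed d → Ed d) (h₁ : Measurable w₁) (h₂ : Measurable w₂) :
    Integrable (fun z : Ed d => C - (if ‖w₁ z‖ ≤ 1 then A * ⟪v, w₁ z⟫ else 0)
      - (if ‖w₂ z‖ ≤ 1 then -(A * ⟪v, w₂ z⟫) else 0)) μ := by
  refine (integrable_const (|C| + |A| * ‖v‖ + |A| * ‖v‖)).mono'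
    (aux_meas C A v w₁ w₂ h₁ h₂).aestronglyMeasurable ?_
  refine Filter.Eventually.of_forall fun z => ?_
  have key : ∀ w : Ed d, |if ‖w‖ ≤ 1 then A * ⟪v, w⟫ else 0| ≤ |A| * ‖v‖ := by
    intro w
    split_ifs with h
    · rw [abs_mul]
      refine mul_le_mul_of_nonneg_left ?_ (abs_nonneg A)
      calc |⟪v, w⟫| ≤ ‖v‖ * ‖w‖ := abs_real_inner_le_norm v w
        _ ≤ ‖v‖ * 1 := by nlinarith [norm_nonneg v]
        _ = ‖v‖ := mul_one _
    · simp only [abs_zero]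
      positivity
  have k1 := abs_le.mp (key (w₁ z))
  have hneg : (if ‖w₂ z‖ ≤ 1 then -(A * ⟪v, w₂ z⟫) else 0)
      = -(if ‖w₂ z‖ ≤ 1 then A * ⟪v, w₂ z⟫ else 0) := by
    split_ifs <;> simp
  have k2 := abs_le.mp (key (w₂ z))
  rw [Real.norm_eq_abs, hneg, abs_le]
  have hC1 := neg_abs_le C
  have hC2 := le_abs_self C
  constructor <;> linarith [k1.1, k1.2, k2.1, k2.2]

lemma combine {d : ℕ} (μ : Measure (Ed d)) [IsFiniteMeasure μ] (a b fr A : ℝ) (v u : Ed d) :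
    (1 / 2) * (∫ z, (a - fr - (if ‖z - u‖ ≤ 1 then A * ⟪v, z - u⟫ else 0)
        - (if ‖z‖ ≤ 1 then -(A * ⟪v, z⟫) else 0)) ∂μ)
    + (1 / 2) * (∫ z, (b - fr - (if ‖z‖ ≤ 1 then A * ⟪v, z⟫ else 0)
        - (if ‖z - u‖ ≤ 1 then -(A * ⟪v, z - u⟫) else 0)) ∂μ)
    = (1 / 2) * (μ Set.univ).toReal * (b + a - 2 * fr) := by
  have h1 : Integrable (fun z : Ed d => a - fr - (if ‖z - u‖ ≤ 1 then A * ⟪v, z - u⟫ else 0)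
      - (if ‖z‖ ≤ 1 then -(A * ⟪v, z⟫) else 0)) μ :=
    aux_int μ (a - fr) A v (fun z => z - u) (fun z => z) (measurable_sub_const u) measurable_id
  have h2 : Integrable (fun z : Ed d => b - fr - (if ‖z‖ ≤ 1 then A * ⟪v, z⟫ else 0)
      - (if ‖z - u‖ ≤ 1 then -(A * ⟪v, z - u⟫) else 0)) μ :=
    aux_int μ (b - fr) A v (fun z => z) (fun z => z - u) measurable_id (measurable_sub_const u)
  have hsum := integral_add h1 h2
  have hptw : (fun z : Ed d => (a - fr - (if ‖z - u‖ ≤ 1 then A * ⟪v, z - u⟫ else 0)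
      - (if ‖z‖ ≤ 1 then -(A * ⟪v, z⟫) else 0))
      + (b - fr - (if ‖z‖ ≤ 1 then A * ⟪v, z⟫ else 0)
      - (if ‖z - u‖ ≤ 1 then -(A * ⟪v, z - u⟫) else 0)))
      = fun _z : Ed d => b + a - 2 * fr := by
    funext z
    split_ifs <;> ring
  rw [hptw] at hsum
  rw [integral_const, smul_eq_mul, measureReal_def] at hsum
  rw [mul_assoc, hsum]
  ring

end Aux


/-- for `h_f(x,y) = f(|x−y|)` one has
`L̃_C h_f(x,y) = (1/2) μ_{x,y,(x−y)_κ}(ℝ^d) [f(|x−y| + κ∧|x−y|) + f(|x−y| − κ∧|x−y|) − 2f(|x−y|)]`. -/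
theorem statement6 {d : ℕ} (ν : Measure (Ed d)) (hν : IsLevyMeasure ν)
    (c : Ed d → Ed d → ℝ) (cLo cUp : ℝ) (hcLo : 0 < cLo) (hcUp : cLo ≤ cUp)
    (hc_cont : Continuous (fun p : Ed d × Ed d => c p.1 p.2))
    (hc_bound : ∀ x z, cLo ≤ c x z ∧ c x z ≤ cUp)
    (κ : ℝ) (hκ : 0 < κ) (hκ1 : κ ≤ 1)
    (f : ℝ → ℝ) (Mf : ℝ)
    (hf_bdd : ∀ r : ℝ, 0 ≤ r → |f r| ≤ Mf)
    (hf_cont : ContinuousOn f (Set.Ici 0))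
    (hf_smooth : ContDiffOn ℝ 2 f (Set.Ioi 0))
    (x y : Ed d) (hxy : x ≠ y) :
    LCdist ν c κ f x y
      = (1 / 2) * (muXYU ν c x y (kap κ (x - y)) Set.univ).toReal
        * (f (‖x - y‖ + min κ ‖x - y‖) + f (‖x - y‖ - min κ ‖x - y‖) - 2 * f ‖x - y‖) := by
  have hvne : x - y ≠ 0 := sub_ne_zero.mpr hxy
  have hr : (0 : ℝ) < ‖x - y‖ := norm_pos_iff.mpr hvne
  unfold LCdist
  set r : ℝ := ‖x - y‖ with hrdef
  set t : ℝ := min 1 (κ / r) with htdef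
  have ht0 : 0 < t := lt_min one_pos (div_pos hκ hr)
  have ht1 : t ≤ 1 := min_le_left _ _
  have htr : t * r = min κ r := by
    rw [htdef, min_mul_of_nonneg _ _ hr.le, one_mul, div_mul_cancel₀ _ hr.ne', min_comm]
  set u : Ed d := kap κ (x - y) with hudef
  have hu : u = t • (x - y) := rfl
  have hune : u ≠ 0 := by
    rw [hu]; exact smul_ne_zero ht0.ne' hvne
  have hkapneg : kap κ (y - x) = -u := by
    rw [hudef, kap, kap]
    rw [show y - x = -(x - y) from (neg_sub x y).symm, norm_neg, smul_neg]
  rw [hkapneg]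
  have e1 : ∀ z : Ed d, x + z - (y + z + u) = x - y - u := fun z => by abel
  have e2 : ∀ z : Ed d, x + z - (y + z + -u) = x - y + u := fun z => by abel
  have e3 : ∀ z : Ed d, x + z - (y + z) = x - y := fun z => by abel
  have hnorm1 : ‖x - y - u‖ = r - min κ r := by
    rw [hu, show x - y - t • (x - y) = (1 - t) • (x - y) from by rw [sub_smul, one_smul],
      norm_smul, Real.norm_eq_abs, abs_of_nonneg (by linarith), ← hrdef, sub_mul, one_mul, htr]
  have hnorm2 : ‖x - y + u‖ = r + min κ r := by
    rw [hu, show x - y + t • (x - y) = (1 + t) • (x - y) from by rw [add_smul, one_smul],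
      norm_smul, Real.norm_eq_abs, abs_of_nonneg (by linarith), ← hrdef, add_mul, one_mul, htr]
  have hzero : ∀ (P : Prop) [Decidable P] (s : ℝ),
      (0 : ℝ) - (if P then s else 0) - (if P then -s else 0) = 0 := by
    intro P _ s; split_ifs <;> ring
  simp only [e1, e2, e3, hnorm1, hnorm2, ← hrdef, sub_self, hzero, integral_zero, add_zero]
  haveI : IsFiniteMeasure (muXYU ν c x y u) :=
    muXYU_isFinite ν hν c cUp (fun a b => (hc_bound a b).2) x y hune
  rw [muXYU_neg ν c hc_cont x y u]
  rw [MeasureTheory.integral_map (measurable_sub_const u).aemeasurable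
    (aux_meas (f (r - min κ r) - f r) (deriv f r / r) (x - y)
      (fun z => z) (fun z => z + u) measurable_id (measurable_add_const u)).aestronglyMeasurable]
  simp only [sub_add_cancel, ← sub_eq_add_neg]
  exact combine (muXYU ν c x y u) (f (r - min κ r)) (f (r + min κ r)) (f r)
    (deriv f r / r) (x - y) u

end
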